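/- With the convention 1/∞ = 0 and in the case r < p, the dyadic norm ‖x‖_{ℓ^p_{∞,r}} satisfies ‖x‖_{ℓ^r} ≤ ‖x‖_{ℓ^p_{∞,r}} ≤ (1 − 2^{−r/p})^{−1/r} ‖x‖_{ℓ^r} for every x : ℤ → ℝ; hence ℓ^p_{∞,r}(ℤ) = ℓ^r(ℤ) with equivalent norms. -/

import Mathlib

open scoped ENNReal
open Finset Function

noncomputable section

/-- The dyadic interval `I(j,k) = [2^j k, 2^j (k+1)) ∩ ℤ`. -/
def dyadicI (j : ℕ) (k : ℤ) : Finset ℤ :=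
  Finset.Ico ((2 ^ j : ℤ) * k) ((2 ^ j : ℤ) * (k + 1))

/-- The dyadic Bourgain–Morrey norm `‖x‖_{ℓ^p_{q,r}}`. -/
def BMnorm (p q r : ℝ) (x : ℤ → ℝ) : ℝ≥0∞ :=
  (∑' jk : ℕ × ℤ,
      ((2 : ℝ≥0∞) ^ jk.1) ^ (r * (1 / q - 1 / p)) *
        (∑ l ∈ dyadicI jk.1 jk.2, ENNReal.ofReal (|x l| ^ p)) ^ (r / p)) ^ (1 / r)

/-- The classical `ℓ^r` norm of a sequence on `ℤ`. -/
def lNorm (r : ℝ) (x : ℤ → ℝ) : ℝ≥0∞ :=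
  (∑' k : ℤ, ENNReal.ofReal (|x k| ^ r)) ^ (1 / r)

end

/-- The dyadic Bourgain–Morrey norm with `q = ∞` (convention `1/∞ = 0`). -/
noncomputable def BMnormInf (p r : ℝ) (x : ℤ → ℝ) : ℝ≥0∞ :=
  (∑' jk : ℕ × ℤ,
      ((2 : ℝ≥0∞) ^ jk.1) ^ (-(r / p)) *
        (∑ l ∈ dyadicI jk.1 jk.2, ENNReal.ofReal (|x l| ^ p)) ^ (r / p)) ^ (1 / r)

/-! The level `j = 0` alone, where the dyadic intervals are singletons, already contributes
`‖x‖_r^r`. Conversely, `t ↦ t ^ (r/p)` is subadditive because `r/p ≤ 1`, so level `j`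
contributes at most `2^{-jr/p} ‖x‖_r^r` (its intervals partition `ℤ`); summing the geometric
series over `j` gives the constant `(1 - 2^{-r/p})⁻¹`. -/

namespace ENNReal

theorem rpow_sum_le_sum_rpow {ι : Type*} (s : Finset ι) (f : ι → ℝ≥0∞) {q : ℝ} (hq0 : 0 < q)
    (hq1 : q ≤ 1) : (∑ i ∈ s, f i) ^ q ≤ ∑ i ∈ s, f i ^ q := by
  classical
  induction s using Finset.induction_on with
  | empty => simp [ENNReal.zero_rpow_of_pos hq0]
  | insert a s ha ih =>
    rw [Finset.sum_insert ha, Finset.sum_insert ha]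
    exact (ENNReal.rpow_add_le_add_rpow _ _ hq0.le hq1).trans (by gcongr)

theorem ofReal_rpow_rpow_div {a p : ℝ} (ha : 0 ≤ a) (hp : 0 < p) {r : ℝ} (hr : 0 ≤ r) :
    ENNReal.ofReal (a ^ p) ^ (r / p) = ENNReal.ofReal (a ^ r) := by
  rw [ENNReal.ofReal_rpow_of_nonneg (Real.rpow_nonneg ha p) (div_nonneg hr hp.le),
    ← Real.rpow_mul ha, mul_div_cancel₀ r hp.ne']

end ENNReal

theorem mem_dyadicI_iff {j : ℕ} {k l : ℤ} : l ∈ dyadicI j k ↔ l / 2 ^ j = k := by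
  rw [dyadicI, Finset.mem_Ico, Int.ediv_eq_iff_of_pos (by positivity)]
  constructor <;> rintro ⟨h₁, h₂⟩ <;> constructor <;> linarith

theorem dyadicI_zero (k : ℤ) : dyadicI 0 k = {k} := by
  ext l
  simp [mem_dyadicI_iff]

theorem tsum_sum_dyadicI (j : ℕ) (b : ℤ → ℝ≥0∞) :
    ∑' k : ℤ, ∑ l ∈ dyadicI j k, b l = ∑' l : ℤ, b l := by
  rw [← ENNReal.tsum_fiberwise b (· / 2 ^ j)]
  refine tsum_congr fun k => ?_
  rw [← Finset.tsum_subtype]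
  exact tsum_congr_set_coe b (by ext l; simp [mem_dyadicI_iff])

noncomputable def dyadicTsum (q : ℝ) (b : ℤ → ℝ≥0∞) : ℝ≥0∞ :=
  ∑' jk : ℕ × ℤ, ((2 : ℝ≥0∞) ^ jk.1) ^ (-q) * (∑ l ∈ dyadicI jk.1 jk.2, b l) ^ q

theorem tsum_rpow_le_dyadicTsum (q : ℝ) (b : ℤ → ℝ≥0∞) :
    ∑' l, b l ^ q ≤ dyadicTsum q b := by
  calc ∑' l, b l ^ q
      = ∑' k, ((2 : ℝ≥0∞) ^ (0 : ℕ)) ^ (-q) * (∑ l ∈ dyadicI 0 k, b l) ^ q := by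
        simp [dyadicI_zero]
    _ ≤ ∑' j : ℕ, ∑' k, ((2 : ℝ≥0∞) ^ j) ^ (-q) * (∑ l ∈ dyadicI j k, b l) ^ q :=
        ENNReal.le_tsum 0
    _ = dyadicTsum q b := by rw [dyadicTsum, ENNReal.tsum_prod']

theorem dyadicTsum_le {q : ℝ} (hq0 : 0 < q) (hq1 : q ≤ 1) (b : ℤ → ℝ≥0∞) :
    dyadicTsum q b ≤ (1 - (2 : ℝ≥0∞) ^ (-q))⁻¹ * ∑' l, b l ^ q := by
  calc dyadicTsum q b
      ≤ ∑' jk : ℕ × ℤ, ((2 : ℝ≥0∞) ^ jk.1) ^ (-q) * ∑ l ∈ dyadicI jk.1 jk.2, b l ^ q := by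
        refine ENNReal.tsum_le_tsum fun jk => ?_
        gcongr
        exact ENNReal.rpow_sum_le_sum_rpow _ _ hq0 hq1
    _ = ∑' j : ℕ, ((2 : ℝ≥0∞) ^ (-q)) ^ j * ∑' l, b l ^ q := by
        rw [ENNReal.tsum_prod']
        refine tsum_congr fun j => ?_
        dsimp only
        rw [ENNReal.tsum_mul_left, tsum_sum_dyadicI, ← ENNReal.rpow_natCast_mul,
          mul_comm (j : ℝ), ENNReal.rpow_mul_natCast]
    _ = (1 - (2 : ℝ≥0∞) ^ (-q))⁻¹ * ∑' l, b l ^ q := by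
        rw [ENNReal.tsum_mul_right, ENNReal.tsum_geometric]

theorem BMnormInf_eq_dyadicTsum (p r : ℝ) (x : ℤ → ℝ) :
    BMnormInf p r x = dyadicTsum (r / p) (fun l => ENNReal.ofReal (|x l| ^ p)) ^ (1 / r) :=
  rfl

theorem lNorm_eq_tsum_rpow_div {p r : ℝ} (hp : 0 < p) (hr : 0 ≤ r) (x : ℤ → ℝ) :
    lNorm r x = (∑' l, ENNReal.ofReal (|x l| ^ p) ^ (r / p)) ^ (1 / r) := by
  simp only [lNorm, ENNReal.ofReal_rpow_rpow_div (abs_nonneg _) hp hr]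

/-- For `q = ∞` and `r < p`:
`‖x‖_{ℓ^r} ≤ ‖x‖_{ℓ^p_{∞,r}} ≤ (1 - 2^{-r/p})^{-1/r} ‖x‖_{ℓ^r}`, so
`ℓ^p_{∞,r}(ℤ) = ℓ^r(ℤ)` with equivalent norms. -/
theorem BMnormInf_equiv_lr_of_lt (p r : ℝ) (hr : 1 ≤ r) (hrp : r < p) (x : ℤ → ℝ) :
    lNorm r x ≤ BMnormInf p r x ∧
    BMnormInf p r x ≤ (1 - (2 : ℝ≥0∞) ^ (-(r / p))) ^ (-(1 / r)) * lNorm r x := by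
  have hr0 : 0 < r := zero_lt_one.trans_le hr
  have hp0 : 0 < p := hr0.trans hrp
  have hrp0 : 0 < r / p := div_pos hr0 hp0
  have hrp1 : r / p ≤ 1 := (div_le_one hp0).2 hrp.le
  rw [BMnormInf_eq_dyadicTsum, lNorm_eq_tsum_rpow_div hp0 hr0.le]
  refine ⟨by gcongr; exact tsum_rpow_le_dyadicTsum _ _, ?_⟩
  calc _ ≤ ((1 - (2 : ℝ≥0∞) ^ (-(r / p)))⁻¹ *
          ∑' l, ENNReal.ofReal (|x l| ^ p) ^ (r / p)) ^ (1 / r) := by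
        gcongr; exact dyadicTsum_le hrp0 hrp1 _
    _ = _ := by
        rw [ENNReal.mul_rpow_of_nonneg _ _ (by positivity), ENNReal.inv_rpow, ← ENNReal.rpow_neg]
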